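/- The centralizer algebra of the image of the local group GL_d = GL(V₁)×⋯×GL(Vₙ) acting on V^{⊗m} = (V₁⊗⋯⊗Vₙ)^{⊗m} by μ(g₁,…,gₙ)(⊗ᵢ⊗ⱼ v_{ij}) = ⊗ᵢ⊗ⱼ gᵢ v_{ij} equals the linear span of the image of (S_m)ⁿ acting by ρ(σ₁,…,σₙ)(⊗ᵢ⊗ⱼ v_{ij}) = ⊗ᵢ⊗ⱼ v_{i σᵢ⁻¹(j)}. -/

import Mathlib

/-!
By Maschke's theorem `k[(S_m)ⁿ]` is semisimple, so by the Jacobson density theorem the span of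
the image of `ρ` is its own double centralizer. It therefore suffices to show that every matrix
commuting with all `ρ(σ)` lies in the span of the `μ(g)`. Such a matrix is a function of the pair
of indices `(a, b)` that is constant on the orbits of `(S_m)ⁿ`, and these orbits are exactly the
sets of pairs for which `μ(g)_{ab}` is the same monomial in the entries of the `gᵢ`; since distinct
monomials are linearly independent functions over an infinite field, the matrix is a linear
combination of the `μ(g)`. Finally, commuting with `μ(g)` for invertible `g` extends to all `g`:
the entries of `X μ(g + t) - μ(g + t) X` are polynomials in `t` vanishing for all but finitely
many `t`.
-/

open scoped Classical

/-- The matrix of `μ(g₁,…,gₙ)` acting on `V^{⊗m} = (V₁⊗⋯⊗Vₙ)^{⊗m}`, whose basis is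
indexed by `κ = Fin m → ∀ i, Fin (d i)`: `μ(g)(⊗ᵢ⊗ⱼ v_{ij}) = ⊗ᵢ⊗ⱼ gᵢ v_{ij}`. -/
noncomputable def muMat {k : Type*} [Field k] {n m : ℕ} {d : Fin n → ℕ}
    (g : ∀ i, Matrix (Fin (d i)) (Fin (d i)) k) :
    Matrix (Fin m → ∀ i, Fin (d i)) (Fin m → ∀ i, Fin (d i)) k :=
  fun a b => ∏ j, ∏ i, g i (a j i) (b j i)

/-- The matrix of `ρ(σ₁,…,σₙ)` acting on `V^{⊗m}` by permuting, for each `i`, the `m`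
tensor slots of the `i`-th factor: `ρ(σ)(⊗ᵢ⊗ⱼ v_{ij}) = ⊗ᵢ⊗ⱼ v_{i σᵢ⁻¹(j)}`. -/
noncomputable def rhoMat {k : Type*} [Field k] {n m : ℕ} {d : Fin n → ℕ}
    (σ : Fin n → Equiv.Perm (Fin m)) :
    Matrix (Fin m → ∀ i, Fin (d i)) (Fin m → ∀ i, Fin (d i)) k :=
  fun b a => if ∀ j i, b j i = a ((σ i)⁻¹ j) i then 1 else 0

open Finset

theorem Representation.asAlgebraHom_mem_span_range {k G V : Type*} [CommSemiring k] [Monoid G]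
    [AddCommMonoid V] [Module k V] (ρ : Representation k G V) (r : MonoidAlgebra k G) :
    ρ.asAlgebraHom r ∈ Submodule.span k (Set.range ρ) := by
  induction r using MonoidAlgebra.induction_linear with
  | zero => simp
  | add r s hr hs => rw [map_add]; exact add_mem hr hs
  | single g c =>
    rw [Representation.asAlgebraHom_single]
    exact Submodule.smul_mem _ _ (Submodule.subset_span ⟨g, rfl⟩)

theorem Representation.mem_span_range_of_forall_commute {k G V : Type*} [Field k] [Group G]
    [Finite G] [NeZero (Nat.card G : k)] [AddCommGroup V] [Module k V] [FiniteDimensional k V]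
    (ρ : Representation k G V) {f : Module.End k V}
    (hf : ∀ φ : Module.End k V, (∀ g, Commute φ (ρ g)) → Commute f φ) :
    f ∈ Submodule.span k (Set.range ρ) := by
  have : Module.Finite (Module.End (MonoidAlgebra k G) ρ.asModule) ρ.asModule :=
    .of_restrictScalars_finite k _ _
  let e := ρ.asModuleEquiv
  -- `f` is linear over the centralizer `End_{k[G]} V`, so Jacobson density realises it as the
  -- action of some `r : k[G]`.
  let F : Module.End (Module.End (MonoidAlgebra k G) ρ.asModule) ρ.asModule :=
    { toFun := fun m => e.symm (f (e m))
      map_add' := by simp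
      map_smul' := fun φ m => by
        have hφ := hf (e.toLinearMap ∘ₗ φ.restrictScalars k ∘ₗ e.symm.toLinearMap) fun g => by
          ext v
          simp only [Module.End.mul_apply, LinearMap.coe_comp, Function.comp_apply,
            LinearEquiv.coe_coe, LinearMap.coe_restrictScalars, e, asModuleEquiv_symm_map_rho,
            φ.map_smul, asModuleEquiv_map_smul, asAlgebraHom_of]
        simpa using congr(e.symm ($hφ.eq (e m))) }
  obtain ⟨r, hr⟩ := Module.Finite.toModuleEnd_moduleEnd_surjective F
  convert ρ.asAlgebraHom_mem_span_range r
  ext v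
  simpa [F, e, asModuleEquiv_map_smul] using congr(e ($hr (e.symm v))).symm

theorem Matrix.mem_span_range_of_forall_commute {k G ι : Type*} [Field k] [Group G] [Finite G]
    [NeZero (Nat.card G : k)] [Fintype ι] [DecidableEq ι] (ρ : G →* Matrix ι ι k)
    {X : Matrix ι ι k} (hX : ∀ Y : Matrix ι ι k, (∀ g, Commute Y (ρ g)) → Commute X Y) :
    X ∈ Submodule.span k (Set.range ρ) := by
  let e : Matrix ι ι k ≃ₐ[k] Module.End k (ι → k) := Matrix.toLinAlgEquiv'
  have he := Representation.mem_span_range_of_forall_commute (e.toAlgHom.toMonoidHom.comp ρ)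
    (f := e X) fun φ hφ => by
      have := hX (e.symm φ) fun g => by simpa using (hφ g).map e.symm
      simpa using this.map e
  rw [MonoidHom.coe_comp, Set.range_comp] at he
  change e.toLinearEquiv X ∈ Submodule.span k (e.toLinearEquiv.toLinearMap '' Set.range ρ) at he
  rwa [Submodule.span_image, Submodule.mem_map_equiv, LinearEquiv.symm_apply_apply] at he

theorem Matrix.commute_permMatrix_iff {ι R : Type*} [Fintype ι] [DecidableEq ι]
    [NonAssocSemiring R] {M : Matrix ι ι R} {σ : Equiv.Perm ι} :
    Commute M (σ.permMatrix R) ↔ ∀ i j, M (σ i) (σ j) = M i j := by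
  rw [Equiv.Perm.permMatrix, commute_iff_eq, PEquiv.toMatrix_toPEquiv_mul,
    PEquiv.mul_toMatrix_toPEquiv, ← Matrix.ext_iff]
  simp only [Matrix.submatrix_apply, id]
  refine ⟨fun h i j => ?_, fun h i j => ?_⟩
  · simpa using (h i (σ j)).symm
  · simpa using (h i (σ.symm j)).symm

theorem Matrix.finite_setOf_not_isUnit_add_smul_one {ι k : Type*} [Fintype ι] [DecidableEq ι]
    [Field k] (g : Matrix ι ι k) : {t : k | ¬IsUnit (g + t • 1)}.Finite := by
  refine (Matrix.finite_spectrum (-g)).subset fun t ht => spectrum.mem_iff.mpr ?_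
  simpa [Algebra.algebraMap_eq_smul_one, add_comm] using ht

theorem Equiv.Perm.exists_comp_eq_of_card_fiber_eq {β γ : Type*} [Fintype β] [DecidableEq γ]
    {F G : β → γ} (h : ∀ z, #{s | F s = z} = #{s | G s = z}) :
    ∃ e : Equiv.Perm β, F ∘ e = G := by
  have hcard (z : γ) : Fintype.card {s // G s = z} = Fintype.card {s // F s = z} := by
    simp only [Fintype.card_subtype, h]
  exact ⟨Equiv.ofFiberEquiv fun z => Fintype.equivOfCardEq (hcard z),
    funext (Equiv.ofFiberEquiv_map _)⟩

theorem MvPolynomial.mem_span_range_eval_monomial {k ι σ : Type*} [Field k] [Infinite k]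
    [Fintype ι] (e : ι → σ →₀ ℕ) {w : ι → k} (hw : ∀ i j, e i = e j → w i = w j) :
    w ∈ Submodule.span k
      (Set.range fun (x : σ → k) (i : ι) => eval x (monomial (e i) (1 : k))) := by
  rw [← Subspace.forall_mem_dualAnnihilator_apply_eq_zero_iff]
  intro φ hφ
  set c : ι → k := fun i => φ fun j => if i = j then 1 else 0
  have hφ_apply (v : ι → k) : φ v = ∑ i, v i * c i := by simp [c, φ.pi_apply_eq_sum_univ v]
  have hp : ∑ i, monomial (e i) (c i) = 0 := MvPolynomial.funext fun x => by
    have := (Submodule.mem_dualAnnihilator φ).1 hφ _ (Submodule.subset_span ⟨x, rfl⟩)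
    simpa [hφ_apply, eval_monomial, mul_comm] using this
  have hfiber (i₀ : ι) : ∑ i with e i = e i₀, c i = 0 := by
    simpa [coeff_sum, coeff_monomial, Finset.sum_filter] using congr(coeff (e i₀) $hp)
  rw [hφ_apply, ← Finset.sum_fiberwise_of_maps_to (g := e) (t := univ.image e) (by simp)]
  refine Finset.sum_eq_zero fun y hy => ?_
  obtain ⟨i₀, -, rfl⟩ := Finset.mem_image.1 hy
  rw [Finset.sum_congr rfl fun i hi => by rw [hw i i₀ (Finset.mem_filter.1 hi).2],
    ← Finset.mul_sum, hfiber, mul_zero]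

section LocalGroup

abbrev TensorIndex {n : ℕ} (m : ℕ) (d : Fin n → ℕ) : Type := Fin m → ∀ i, Fin (d i)

variable {n m : ℕ} {d : Fin n → ℕ}

local notation "κ" => TensorIndex m d

def slotPerm : (Fin n → Equiv.Perm (Fin m)) →* Equiv.Perm κ where
  toFun σ :=
    { toFun := fun a j i => a ((σ i)⁻¹ j) i
      invFun := fun a j i => a (σ i j) i
      left_inv := fun a => by simp
      right_inv := fun a => by simp }
  map_one' := rfl
  map_mul' _ _ := rfl

theorem slotPerm_apply (σ : Fin n → Equiv.Perm (Fin m)) (a : κ) (j : Fin m) (i : Fin n) :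
    slotPerm σ a j i = a ((σ i)⁻¹ j) i := rfl

noncomputable def entryExponent (a b : κ) : ((i : Fin n) × Fin (d i) × Fin (d i)) →₀ ℕ :=
  ∑ j, ∑ i, Finsupp.single ⟨i, a j i, b j i⟩ 1

theorem entryExponent_apply (a b : κ) (i : Fin n) (w : Fin (d i) × Fin (d i)) :
    entryExponent a b ⟨i, w⟩ = #{j | (a j i, b j i) = w} := by
  simp only [entryExponent, Finsupp.coe_finsetSum, Finset.sum_apply, Finset.card_filter]
  refine Finset.sum_congr rfl fun j _ => ?_
  rw [Finset.sum_eq_single_of_mem i (mem_univ _) fun i' _ hi' =>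
    Finsupp.single_eq_of_ne fun h => hi' (congrArg Sigma.fst h).symm]
  simp [Finsupp.single_apply]

theorem exists_slotPerm_of_entryExponent_eq {a b a' b' : κ}
    (h : entryExponent a b = entryExponent a' b') :
    ∃ σ, slotPerm σ a = a' ∧ slotPerm σ b = b' := by
  have hcard (i : Fin n) (w : Fin (d i) × Fin (d i)) :
      #{j | (a j i, b j i) = w} = #{j | (a' j i, b' j i) = w} := by
    rw [← entryExponent_apply, h, entryExponent_apply]
  choose τ hτ using fun i => Equiv.Perm.exists_comp_eq_of_card_fiber_eq (hcard i)
  refine ⟨fun i => (τ i)⁻¹, ?_, ?_⟩ <;> funext j i <;> simp only [slotPerm_apply, inv_inv]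
  · exact congrArg Prod.fst (congrFun (hτ i) j)
  · exact congrArg Prod.snd (congrFun (hτ i) j)

variable {k : Type*} [Field k]

theorem rhoMat_eq_permMatrix (σ : Fin n → Equiv.Perm (Fin m)) :
    rhoMat (k := k) (d := d) σ = ((slotPerm σ)⁻¹).permMatrix k := by
  ext b a
  simp only [rhoMat, Equiv.Perm.permMatrix, PEquiv.toMatrix_apply, Equiv.toPEquiv_apply,
    Option.mem_def, Option.some.injEq, Equiv.Perm.inv_def, Equiv.symm_apply_eq]
  simp only [funext_iff, slotPerm_apply, Equiv.Perm.inv_def]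

noncomputable def rhoHom : (Fin n → Equiv.Perm (Fin m)) →* Matrix κ κ k :=
  Matrix.permMatrixHom.comp slotPerm

theorem coe_rhoHom : ⇑(rhoHom (k := k) (d := d) (m := m)) = rhoMat := by
  funext σ
  rw [rhoMat_eq_permMatrix]
  rfl

theorem forall_commute_rhoMat_iff {Y : Matrix κ κ k} :
    (∀ σ, Commute Y (rhoMat σ)) ↔ ∀ σ a b, Y (slotPerm σ a) (slotPerm σ b) = Y a b := by
  simp only [rhoMat_eq_permMatrix, Matrix.commute_permMatrix_iff, ← map_inv]
  exact (Equiv.inv _).forall_congr_left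

theorem muMat_slotPerm (g : ∀ i, Matrix (Fin (d i)) (Fin (d i)) k)
    (σ : Fin n → Equiv.Perm (Fin m)) (a b : κ) :
    muMat g (slotPerm σ a) (slotPerm σ b) = muMat g a b := by
  simp only [muMat, slotPerm_apply]
  rw [Finset.prod_comm, Finset.prod_comm (γ := Fin m)]
  exact Finset.prod_congr rfl fun i _ => Equiv.prod_comp (σ i)⁻¹ (fun j => g i (a j i) (b j i))

theorem muMat_eq_eval_monomial (x : ((i : Fin n) × Fin (d i) × Fin (d i)) → k) (a b : κ) :
    muMat (fun i => Matrix.of fun p q => x ⟨i, p, q⟩) a b =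
      MvPolynomial.eval x (MvPolynomial.monomial (entryExponent a b) 1) := by
  simp [muMat, entryExponent, MvPolynomial.monomial_sum_one, MvPolynomial.eval_monomial]

theorem mem_span_range_muMat_of_forall_slotPerm [Infinite k] {Y : Matrix κ κ k}
    (hY : ∀ σ a b, Y (slotPerm σ a) (slotPerm σ b) = Y a b) :
    Y ∈ Submodule.span k (Set.range muMat) := by
  have hw := MvPolynomial.mem_span_range_eval_monomial (k := k)
    (fun p : κ × κ => entryExponent p.1 p.2) (w := Function.uncurry Y)
    fun ⟨a, b⟩ ⟨a', b'⟩ h => by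
      obtain ⟨σ, rfl, rfl⟩ := exists_slotPerm_of_entryExponent_eq h
      exact (hY σ a b).symm
  let L := (LinearEquiv.curry k k κ κ).trans (Matrix.ofLinearEquiv k)
  refine Submodule.span_mono ?_ (Submodule.apply_mem_span_image_of_mem_span L.toLinearMap hw)
  rintro _ ⟨_, ⟨x, rfl⟩, rfl⟩
  exact ⟨fun i => Matrix.of fun p q => x ⟨i, p, q⟩, by ext a b; exact muMat_eq_eval_monomial x a b⟩

open Polynomial in
theorem commute_muMat_of_forall_isUnit [Infinite k] {A : Matrix κ κ k}
    (hA : ∀ g : ∀ i, Matrix (Fin (d i)) (Fin (d i)) k, (∀ i, IsUnit (g i)) → Commute A (muMat g))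
    (g : ∀ i, Matrix (Fin (d i)) (Fin (d i)) k) : Commute A (muMat g) := by
  let P : Matrix κ κ k[X] :=
    Matrix.of fun a b => ∏ j, ∏ i, ((g i).map C + (X : k[X]) • 1) (a j i) (b j i)
  let Q := A.map C * P - P * A.map C
  have hQ (t : k) : (evalRingHom t).mapMatrix Q =
      A * muMat (fun i => g i + t • 1) - muMat (fun i => g i + t • 1) * A := by
    have hA : (evalRingHom t).mapMatrix (A.map C) = A := by ext; simp
    have hP : (evalRingHom t).mapMatrix P = muMat (fun i => g i + t • 1) := by
      ext; simp [P, muMat, eval_prod, Matrix.one_apply, apply_ite]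
    simp only [Q, map_sub, map_mul, hA, hP]
  have hgood : {t : k | ∀ i, IsUnit (g i + t • 1)}.Infinite :=
    (Set.finite_iUnion fun i => (g i).finite_setOf_not_isUnit_add_smul_one).infinite_compl.mono
      fun t ht => by simpa using ht
  have hQ0 : Q = 0 :=
    Matrix.ext fun p q => eq_zero_of_infinite_isRoot _ <| hgood.mono fun t ht => by
      simpa [(hA _ ht).eq] using congr($(hQ t) p q)
  rw [commute_iff_eq]
  simpa [hQ0, sub_eq_zero] using (hQ 0).symm

end LocalGroup

theorem stmt_7_general {k : Type*} [Field k] [CharZero k] {n m : ℕ}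
    (d : Fin n → ℕ) (X : Matrix (Fin m → ∀ i, Fin (d i)) (Fin m → ∀ i, Fin (d i)) k) :
    (∀ g : ∀ i, Matrix (Fin (d i)) (Fin (d i)) k, (∀ i, IsUnit (g i)) →
      X * muMat g = muMat g * X) ↔
    X ∈ Submodule.span k
      (Set.range (rhoMat (k := k) (d := d) (m := m) : (Fin n → Equiv.Perm (Fin m)) → _)) := by
  constructor
  · intro hX
    have hμ := commute_muMat_of_forall_isUnit hX
    rw [← coe_rhoHom]
    refine Matrix.mem_span_range_of_forall_commute _ fun Y hY => ?_
    rw [coe_rhoHom, forall_commute_rhoMat_iff] at hY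
    exact Commute.span_right (by rintro _ ⟨g, rfl⟩; exact hμ g) Y
      (mem_span_range_muMat_of_forall_slotPerm hY)
  · intro hX g _
    refine (Commute.span_left ?_ X hX).eq
    rintro _ ⟨σ, rfl⟩
    exact (forall_commute_rhoMat_iff.2 (muMat_slotPerm g) σ).symm

/-- The centralizer algebra of the image of the local group
`GL_d = GL(V₁)×⋯×GL(Vₙ)` acting on `V^{⊗m}` via `μ` equals the linear span of the image of
`(S_m)ⁿ` acting via `ρ`. -/
theorem stmt_7 {k : Type*} [Field k] [IsAlgClosed k] [CharZero k] {n m : ℕ}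
    (d : Fin n → ℕ) (X : Matrix (Fin m → ∀ i, Fin (d i)) (Fin m → ∀ i, Fin (d i)) k) :
    (∀ g : ∀ i, Matrix (Fin (d i)) (Fin (d i)) k, (∀ i, IsUnit (g i)) →
      X * muMat g = muMat g * X) ↔
    X ∈ Submodule.span k
      (Set.range (rhoMat (k := k) (d := d) (m := m) : (Fin n → Equiv.Perm (Fin m)) → _)) :=
  stmt_7_general d X
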